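/- arXiv:2005.09517 — 2 statements merged into one kernel-verified Lean document; each statement's English description precedes it below -/
import Mathlib

section
/- The series c_r = Σ_{k=1}^∞ Γ(k+1-r)/Γ(k+3-2r) converges, and with d_r = ((1-r)/Γ(1-r))·(c_r + Γ(1-r)/(2(1-r)·Γ(2(1-r)))), the second moment of the number of nonzero steps satisfies E[(N*_n)^2] = d_r·n^{2(1-r)} + o(n^{2(1-r)}) as n → ∞. -/
/-!
With `q = 1 - r`, conditioning on `𝓕 n` in `N*_{n+1} = N*_n + I*_{n+1}` and in
`(N*_{n+1})² = (N*_n)² + 2 N*_n I*_{n+1} + I*_{n+1}` gives the linear recurrences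
`E N*_{n+1} = (1 + q/n) E N*_n` and `E (N*_{n+1})² = (1 + 2q/n) E (N*_n)² + (q/n) E N*_n`.
The homogeneous equation `x_{n+1} = (1 + s/n) x_n` is solved by `Γ(n+s)/Γ(n)`; dividing by it
turns the second recurrence into a telescoping sum with terms `(q/Γ(q)) Γ(k+q)/Γ(k+1+2q)`.
Since `Γ(n+s) ~ Γ(n) n^s` (Euler's limit formula), this series converges and
`E (N*_n)² / n^{2q} → d_r`.
-/

open MeasureTheory Filter Asymptotics Topology Finset

namespace Real

theorem prod_range_add_natCast_mul_Gamma {a : ℝ} (ha : 0 < a) (n : ℕ) :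
    (∏ j ∈ range n, (a + j)) * Gamma a = Gamma (a + n) := by
  induction n with
  | zero => simp
  | succ n ih =>
    rw [prod_range_succ, mul_right_comm, ih, Nat.cast_succ, ← add_assoc,
      Gamma_add_one (by positivity), mul_comm]

theorem tendsto_Gamma_nat_add_div {a : ℝ} (ha : 0 < a) :
    Tendsto (fun n : ℕ => Gamma (n + a) / (Gamma n * (n : ℝ) ^ a)) atTop (𝓝 1) := by
  have hGa : Gamma a ≠ 0 := (Gamma_pos_of_pos ha).ne'
  -- Euler's limit formula, with `Γ a / GammaSeq a n = Γ (n + 1 + a) / (n! * n ^ a)`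
  have hseq : Tendsto (fun n => Gamma a / GammaSeq a n) atTop (𝓝 1) := by
    have h := (tendsto_const_nhds (x := Gamma a)).div (GammaSeq_tendsto_Gamma a) hGa
    rwa [div_self hGa] at h
  have hshift : Tendsto (fun n : ℕ => ((n : ℝ) / (n + 1)) ^ a) atTop (𝓝 1) := by
    simpa using (tendsto_natCast_div_add_atTop (1 : ℝ)).rpow_const (Or.inr ha.le)
  rw [← tendsto_add_atTop_iff_nat 1]
  refine (mul_one (1 : ℝ) ▸ hseq.mul hshift).congr' ?_
  filter_upwards [eventually_gt_atTop 0] with n hn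
  have hn' : (0 : ℝ) < n := by exact_mod_cast hn
  have hprod := prod_range_add_natCast_mul_Gamma ha (n + 1)
  push_cast at hprod ⊢
  rw [GammaSeq, div_rpow hn'.le (by positivity), Gamma_nat_eq_factorial,
    show (n : ℝ) + 1 + a = a + (n + 1) by ring, ← hprod]
  have : (0 : ℝ) < n ^ a := by positivity
  have : (0 : ℝ) < (n + 1) ^ a := by positivity
  have : (0 : ℝ) < n.factorial := by positivity
  field_simp

theorem summable_Gamma_nat_add_div_Gamma_nat_add {a b : ℝ} (ha : 0 < a) (hb : 0 < b)
    (hab : a + 1 < b) : Summable fun n : ℕ => Gamma (n + a) / Gamma (n + b) := by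
  have hQ := (tendsto_Gamma_nat_add_div ha).div (tendsto_Gamma_nat_add_div hb) one_ne_zero
  rw [div_one] at hQ
  refine summable_of_isBigO_nat (summable_nat_rpow.mpr (by linarith : a - b < -1)) ?_
  refine (((hQ.isBigO_one ℝ).mul (isBigO_refl (fun n : ℕ => (n : ℝ) ^ (a - b)) atTop)).trans
    (by simp [isBigO_refl])).congr' ?_ EventuallyEq.rfl
  filter_upwards [eventually_gt_atTop 0] with n hn
  have hn' : (0 : ℝ) < n := by exact_mod_cast hn
  have : 0 < Gamma n := Gamma_pos_of_pos hn'
  have : 0 < Gamma (n + b) := Gamma_pos_of_pos (by positivity)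
  rw [Pi.div_apply, rpow_sub hn']
  have : (0 : ℝ) < n ^ a := by positivity
  have : (0 : ℝ) < n ^ b := by positivity
  field_simp

theorem Gamma_add_one_add_div_Gamma_add_one {x s : ℝ} (hx : 0 < x) (hxs : 0 < x + s) :
    Gamma (x + 1 + s) / Gamma (x + 1) = (1 + s / x) * (Gamma (x + s) / Gamma x) := by
  rw [add_right_comm, Gamma_add_one hxs.ne', Gamma_add_one hx.ne']
  have := Gamma_pos_of_pos hx
  field_simp

end Real

open Real

theorem div_eq_add_sum_of_eq_mul_add {K : Type*} [Field K] {a u ρ P : ℕ → K}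
    (hP : ∀ n, P n ≠ 0) (hρ : ∀ n, P (n + 1) = ρ n * P n)
    (ha : ∀ n, a (n + 1) = ρ n * a n + u n) (n : ℕ) :
    a n / P n = a 0 / P 0 + ∑ k ∈ range n, u k / P (k + 1) := by
  induction n with
  | zero => simp
  | succ n ih =>
    have hρn : ρ n ≠ 0 := fun h => hP (n + 1) (by rw [hρ, h, zero_mul])
    rw [sum_range_succ, ← add_assoc, ← ih, ha, add_div, hρ, mul_div_mul_left _ _ hρn]

noncomputable def gammaRatio (s : ℝ) (m : ℕ) : ℝ := Gamma (m + 1 + s) / Gamma (m + 1)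

theorem gammaRatio_pos {s : ℝ} (hs : 0 ≤ s) (m : ℕ) : 0 < gammaRatio s m :=
  div_pos (Gamma_pos_of_pos (by positivity)) (Gamma_pos_of_pos (by positivity))

theorem gammaRatio_zero {s : ℝ} (hs : 0 < s) : gammaRatio s 0 = s * Gamma s := by
  simp [gammaRatio, add_comm 1 s, Gamma_add_one hs.ne']

theorem gammaRatio_succ {s : ℝ} (hs : 0 ≤ s) (m : ℕ) :
    gammaRatio s (m + 1) = (1 + s / (m + 1)) * gammaRatio s m := by
  simp only [gammaRatio]
  push_cast
  exact Gamma_add_one_add_div_Gamma_add_one (by positivity) (by positivity)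

theorem tendsto_gammaRatio_div_rpow {s : ℝ} (hs : 0 < s) :
    Tendsto (fun m : ℕ => gammaRatio s m / ((m : ℝ) + 1) ^ s) atTop (𝓝 1) := by
  refine ((tendsto_add_atTop_iff_nat 1).mpr (tendsto_Gamma_nat_add_div hs)).congr fun m => ?_
  simp only [gammaRatio, div_div]
  push_cast
  rfl

section MomentRecurrence

variable {q : ℝ} {A B : ℕ → ℝ}

theorem eq_gammaRatio_div_of_first_moment_recurrence (hq : 0 < q) (hB1 : B 1 = q)
    (hB : ∀ n : ℕ, 1 ≤ n → B (n + 1) = (1 + q / n) * B n) (m : ℕ) :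
    B (m + 1) = gammaRatio q m / Gamma q := by
  have h := div_eq_add_sum_of_eq_mul_add (a := fun m => B (m + 1)) (u := 0)
    (fun m => (gammaRatio_pos hq.le m).ne') (gammaRatio_succ hq.le)
    (fun m => by simpa using hB (m + 1) (by omega)) m
  simp only [Pi.zero_apply, zero_div, sum_const_zero, add_zero, zero_add, hB1, gammaRatio_zero hq,
    div_mul_cancel_left₀ hq.ne', div_eq_iff (gammaRatio_pos hq.le m).ne'] at h
  rw [h, div_eq_inv_mul]

theorem div_gammaRatio_eq_of_second_moment_recurrence (hq : 0 < q) (hA1 : A 1 = q)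
    (hB1 : B 1 = q) (hB : ∀ n : ℕ, 1 ≤ n → B (n + 1) = (1 + q / n) * B n)
    (hA : ∀ n : ℕ, 1 ≤ n → A (n + 1) = (1 + 2 * (q / n)) * A n + q / n * B n) (m : ℕ) :
    A (m + 1) / gammaRatio (2 * q) m = q / Gamma (2 * q + 1)
      + q / Gamma q * ∑ k ∈ range m, Gamma (k + 1 + q) / Gamma (k + 2 + 2 * q) := by
  have h := div_eq_add_sum_of_eq_mul_add (a := fun m => A (m + 1))
    (u := fun m => q / (m + 1) * B (m + 1))
    (fun m => (gammaRatio_pos (s := 2 * q) (by positivity) m).ne')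
    (gammaRatio_succ (s := 2 * q) (by positivity))
    (fun m => by simpa [mul_div_assoc] using hA (m + 1) (by omega)) m
  simp only [zero_add, hA1, gammaRatio_zero (by positivity : 0 < 2 * q)] at h
  rw [h, ← Gamma_add_one (by positivity), mul_sum]
  congr 1
  refine sum_congr rfl fun k _ => ?_
  rw [eq_gammaRatio_div_of_first_moment_recurrence hq hB1 hB]
  simp only [gammaRatio]
  push_cast
  rw [show (k : ℝ) + 1 + 1 + 2 * q = k + 2 + 2 * q by ring,
    Gamma_add_one (s := (k : ℝ) + 1) (by positivity)]
  have := Gamma_pos_of_pos (by positivity : (0 : ℝ) < k + 1)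
  have := Gamma_pos_of_pos (by positivity : (0 : ℝ) < k + 2 + 2 * q)
  have := Gamma_pos_of_pos hq
  field_simp

theorem tendsto_div_rpow_of_moment_recurrence (hq : 0 < q) (hA1 : A 1 = q) (hB1 : B 1 = q)
    (hB : ∀ n : ℕ, 1 ≤ n → B (n + 1) = (1 + q / n) * B n)
    (hA : ∀ n : ℕ, 1 ≤ n → A (n + 1) = (1 + 2 * (q / n)) * A n + q / n * B n) :
    Tendsto (fun n : ℕ => A n / (n : ℝ) ^ (2 * q)) atTop
      (𝓝 (q / Gamma q * (∑' k : ℕ, Gamma (k + 1 + q) / Gamma (k + 2 + 2 * q)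
        + Gamma q / (2 * q * Gamma (2 * q))))) := by
  have hsum : Summable fun k : ℕ => Gamma (k + 1 + q) / Gamma (k + 2 + 2 * q) := by
    simpa only [add_assoc] using summable_Gamma_nat_add_div_Gamma_nat_add (a := 1 + q)
      (b := 2 + 2 * q) (by positivity) (by positivity) (by linarith)
  have hA_lim : Tendsto (fun m : ℕ => A (m + 1) / gammaRatio (2 * q) m) atTop
      (𝓝 (q / Gamma (2 * q + 1)
        + q / Gamma q * ∑' k : ℕ, Gamma (k + 1 + q) / Gamma (k + 2 + 2 * q))) := by
    simp_rw [div_gammaRatio_eq_of_second_moment_recurrence hq hA1 hB1 hB hA]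
    exact tendsto_const_nhds.add (hsum.hasSum.tendsto_sum_nat.const_mul _)
  have hlim := hA_lim.mul (tendsto_gammaRatio_div_rpow (by positivity : 0 < 2 * q))
  rw [mul_one, Gamma_add_one (by positivity)] at hlim
  rw [← tendsto_add_atTop_iff_nat 1]
  convert hlim using 1
  · funext m
    have := gammaRatio_pos (by positivity : 0 ≤ 2 * q) m
    push_cast
    field_simp
  · have := Gamma_pos_of_pos hq
    have := Gamma_pos_of_pos (by positivity : 0 < 2 * q)
    congr 1
    field_simp
    ring

end MomentRecurrence

section CondExp

variable {Ω : Type*} {m m0 : MeasurableSpace Ω} {μ : Measure Ω} {X Y : Ω → ℝ}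

theorem integral_mul_eq_integral_mul_condExp (hm : m ≤ m0) [SigmaFinite (μ.trim hm)]
    (hX : StronglyMeasurable[m] X) (hXY : Integrable (X * Y) μ) (hY : Integrable Y μ) :
    ∫ ω, X ω * Y ω ∂μ = ∫ ω, X ω * (μ[Y|m]) ω ∂μ := by
  rw [← integral_condExp hm]
  exact integral_congr_ae (condExp_mul_of_stronglyMeasurable_left hX hXY hY)

theorem integral_eq_mul_integral_of_condExp_eq (hm : m ≤ m0) [SigmaFinite (μ.trim hm)] {c : ℝ}
    (hYX : μ[Y|m] =ᵐ[μ] fun ω => c * X ω) : ∫ ω, Y ω ∂μ = c * ∫ ω, X ω ∂μ := by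
  rw [← integral_condExp hm, integral_congr_ae hYX, integral_const_mul]

theorem integral_add_of_condExp_eq (hm : m ≤ m0) [SigmaFinite (μ.trim hm)] {c : ℝ}
    (hX : Integrable X μ) (hY : Integrable Y μ) (hYX : μ[Y|m] =ᵐ[μ] fun ω => c * X ω) :
    ∫ ω, X ω + Y ω ∂μ = (1 + c) * ∫ ω, X ω ∂μ := by
  rw [integral_add hX hY, integral_eq_mul_integral_of_condExp_eq hm hYX]
  ring

theorem integral_add_sq_of_condExp_eq [IsFiniteMeasure μ] (hm : m ≤ m0) {c C : ℝ}
    (hX : StronglyMeasurable[m] X) (hXC : ∀ ω, |X ω| ≤ C)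
    (hY_int : Integrable Y μ) (hY01 : ∀ ω, Y ω = 0 ∨ Y ω = 1)
    (hYX : μ[Y|m] =ᵐ[μ] fun ω => c * X ω) :
    ∫ ω, (X ω + Y ω) ^ 2 ∂μ =
      (1 + 2 * c) * ∫ ω, X ω ^ 2 ∂μ + c * ∫ ω, X ω ∂μ := by
  have hX0 : StronglyMeasurable[m0] X := hX.mono hm
  have hX_int : Integrable X μ := .of_bound hX0.aestronglyMeasurable C (.of_forall hXC)
  have hXY_int : Integrable (X * Y) μ := hY_int.bdd_mul hX0.aestronglyMeasurable (.of_forall hXC)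
  have hXX_int : Integrable (fun ω => X ω ^ 2) μ := by
    simpa only [sq] using hX_int.bdd_mul hX0.aestronglyMeasurable (.of_forall hXC)
  have hXY : ∫ ω, X ω * Y ω ∂μ = c * ∫ ω, X ω ^ 2 ∂μ := by
    rw [integral_mul_eq_integral_mul_condExp hm hX hXY_int hY_int, ← integral_const_mul]
    refine integral_congr_ae ?_
    filter_upwards [hYX] with ω hω
    rw [hω]
    ring
  have hYY : ∀ ω, (X ω + Y ω) ^ 2 = X ω ^ 2 + 2 * (X ω * Y ω) + Y ω := fun ω => by
    rcases hY01 ω with h | h <;> rw [h] <;> ring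
  have h2XY_int : Integrable (fun ω => 2 * (X ω * Y ω)) μ := hXY_int.const_mul 2
  have hsum_int : Integrable (fun ω => X ω ^ 2 + 2 * (X ω * Y ω)) μ := hXX_int.add h2XY_int
  simp_rw [hYY]
  rw [integral_add hsum_int hY_int, integral_add hXX_int h2XY_int, integral_const_mul, hXY,
    integral_eq_mul_integral_of_condExp_eq hm hYX]
  ring

end CondExp

theorem isLittleO_sub_mul_of_tendsto_div {α : Type*} {l : Filter α} {u v : α → ℝ} {d : ℝ}
    (hv : ∀ᶠ x in l, v x ≠ 0) (h : Tendsto (fun x => u x / v x) l (𝓝 d)) :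
    (fun x => u x - d * v x) =o[l] v := by
  rw [isLittleO_iff_tendsto' (hv.mono fun x hx h0 => absurd h0 hx)]
  refine (sub_self d ▸ h.sub_const d).congr' ?_
  filter_upwards [hv] with x hx
  rw [sub_div, mul_div_cancel_right₀ d hx]

theorem abs_sum_le_card_of_forall_eq_zero_or_one {ι : Type*} (s : Finset ι) {f : ι → ℝ}
    (hf : ∀ i ∈ s, f i = 0 ∨ f i = 1) : |∑ i ∈ s, f i| ≤ #s :=
  calc |∑ i ∈ s, f i| ≤ ∑ i ∈ s, |f i| := abs_sum_le_sum_abs _ _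
    _ ≤ ∑ _i ∈ s, (1 : ℝ) :=
      sum_le_sum fun i hi => by rcases hf i hi with h | h <;> simp [h]
    _ = #s := by simp

theorem second_moment_nonzero_steps_general
    {Ω : Type*} [m0 : MeasurableSpace Ω] (μ : Measure Ω) [IsProbabilityMeasure μ]
    (𝓕 : Filtration ℕ m0) (r : ℝ) (hr1 : r < 1)
    (Istar : ℕ → Ω → ℝ)
    (h01 : ∀ n : ℕ, 1 ≤ n → ∀ ω, Istar n ω = 0 ∨ Istar n ω = 1)
    (hadapt : ∀ n : ℕ, 1 ≤ n → StronglyMeasurable[𝓕 n] (Istar n))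
    (hint : ∀ n : ℕ, 1 ≤ n → Integrable (Istar n) μ)
    (Nstar : ℕ → Ω → ℝ)
    (hN : ∀ n ω, Nstar n ω = ∑ k ∈ Finset.Icc 1 n, Istar k ω)
    (hI1 : ∫ ω, Istar 1 ω ∂μ = 1 - r)
    (hcond : ∀ n : ℕ, 1 ≤ n →
      (μ[Istar (n + 1)|𝓕 n]) =ᵐ[μ] fun ω => ((1 - r) / (n : ℝ)) * Nstar n ω)
    (cr dr : ℝ)
    (hcr : cr = ∑' k : ℕ,
      Real.Gamma (((k : ℝ) + 1) + 1 - r) / Real.Gamma (((k : ℝ) + 1) + 3 - 2 * r))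
    (hdr : dr = (1 - r) / Real.Gamma (1 - r)
      * (cr + Real.Gamma (1 - r) / (2 * (1 - r) * Real.Gamma (2 * (1 - r))))) :
    Summable (fun k : ℕ =>
      Real.Gamma (((k : ℝ) + 1) + 1 - r) / Real.Gamma (((k : ℝ) + 1) + 3 - 2 * r)) ∧
    (fun n : ℕ => (∫ ω, (Nstar n ω) ^ 2 ∂μ) - dr * (n : ℝ) ^ (2 * (1 - r)))
      =o[atTop] fun n : ℕ => (n : ℝ) ^ (2 * (1 - r)) := by
  have hq : 0 < 1 - r := by linarith
  obtain rfl : Nstar = fun n ω => ∑ k ∈ Icc 1 n, Istar k ω := funext fun n => funext (hN n)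
  have hI1_sq : (fun ω => Istar 1 ω ^ 2) = Istar 1 := funext fun ω => by
    rcases h01 1 le_rfl ω with h | h <;> simp [h]
  have hlim := tendsto_div_rpow_of_moment_recurrence hq
    (A := fun n => ∫ ω, (∑ k ∈ Icc 1 n, Istar k ω) ^ 2 ∂μ)
    (B := fun n => ∫ ω, ∑ k ∈ Icc 1 n, Istar k ω ∂μ)
    (by simpa [hI1_sq] using hI1) (by simpa using hI1)
    (fun n hn => by
      simp only [sum_Icc_succ_top (by omega : 1 ≤ n + 1)]
      exact integral_add_of_condExp_eq (𝓕.le n)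
        (integrable_finsetSum _ fun k hk => hint k (mem_Icc.1 hk).1) (hint _ (by omega))
        (hcond n hn))
    (fun n hn => by
      simp only [sum_Icc_succ_top (by omega : 1 ≤ n + 1)]
      exact integral_add_sq_of_condExp_eq (𝓕.le n)
        (stronglyMeasurable_fun_sum _ fun k hk =>
          (hadapt k (mem_Icc.1 hk).1).mono (𝓕.mono (mem_Icc.1 hk).2))
        (fun ω => abs_sum_le_card_of_forall_eq_zero_or_one _ fun k hk => h01 k (mem_Icc.1 hk).1 ω)
        (hint _ (by omega)) (h01 _ (by omega)) (hcond n hn))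
  have hterm : ∀ k : ℕ, Real.Gamma (k + 1 + (1 - r)) / Real.Gamma (k + 2 + 2 * (1 - r)) =
      Real.Gamma (((k : ℝ) + 1) + 1 - r) / Real.Gamma (((k : ℝ) + 1) + 3 - 2 * r) := fun k => by
    ring_nf
  simp only [hterm, ← hcr, ← hdr] at hlim
  refine ⟨?_, isLittleO_sub_mul_of_tendsto_div
    ((eventually_gt_atTop 0).mono fun n hn => by positivity) hlim⟩
  simpa only [Nat.cast_add, Nat.cast_one, add_sub_assoc] using (summable_nat_add_iff 1).mpr
    (summable_Gamma_nat_add_div_Gamma_nat_add (a := 1 - r) (b := 3 - 2 * r) hq (by linarith)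
      (by linarith))

/-- For the ERW with delays and full memory: the series
`c_r = ∑_{k=1}^∞ Γ(k+1-r)/Γ(k+3-2r)` converges, and with
`d_r = ((1-r)/Γ(1-r)) (c_r + Γ(1-r)/(2(1-r)Γ(2(1-r))))`, the second moment of the
number of nonzero steps satisfies `E[(N*_n)^2] = d_r n^{2(1-r)} + o(n^{2(1-r)})`. -/
theorem second_moment_nonzero_steps
    {Ω : Type*} [m0 : MeasurableSpace Ω] (μ : Measure Ω) [IsProbabilityMeasure μ]
    (𝓕 : Filtration ℕ m0) (r : ℝ) (hr0 : 0 < r) (hr1 : r < 1)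
    (Istar : ℕ → Ω → ℝ)
    (h01 : ∀ n : ℕ, 1 ≤ n → ∀ ω, Istar n ω = 0 ∨ Istar n ω = 1)
    (hadapt : ∀ n : ℕ, 1 ≤ n → StronglyMeasurable[𝓕 n] (Istar n))
    (hint : ∀ n : ℕ, 1 ≤ n → Integrable (Istar n) μ)
    (Nstar : ℕ → Ω → ℝ)
    (hN : ∀ n ω, Nstar n ω = ∑ k ∈ Finset.Icc 1 n, Istar k ω)
    (hI1 : ∫ ω, Istar 1 ω ∂μ = 1 - r)
    (hcond : ∀ n : ℕ, 1 ≤ n →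
      (μ[Istar (n + 1)|𝓕 n]) =ᵐ[μ] fun ω => ((1 - r) / (n : ℝ)) * Nstar n ω)
    (cr dr : ℝ)
    (hcr : cr = ∑' k : ℕ,
      Real.Gamma (((k : ℝ) + 1) + 1 - r) / Real.Gamma (((k : ℝ) + 1) + 3 - 2 * r))
    (hdr : dr = (1 - r) / Real.Gamma (1 - r)
      * (cr + Real.Gamma (1 - r) / (2 * (1 - r) * Real.Gamma (2 * (1 - r))))) :
    Summable (fun k : ℕ =>
      Real.Gamma (((k : ℝ) + 1) + 1 - r) / Real.Gamma (((k : ℝ) + 1) + 3 - 2 * r)) ∧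
    (fun n : ℕ => (∫ ω, (Nstar n ω) ^ 2 ∂μ) - dr * (n : ℝ) ^ (2 * (1 - r)))
      =o[atTop] fun n : ℕ => (n : ℝ) ^ (2 * (1 - r)) :=
  second_moment_nonzero_steps_general (m0 := m0) μ 𝓕 r hr1 Istar h01 hadapt hint Nstar hN hI1 hcond
    cr dr hcr hdr
end

section
/- There exists an integrable random variable Y such that M*_n = α*_n·N*_n converges to Y almost surely and in L^1 as n → ∞ (where α*_k = Γ(k)·Γ(2-r)/Γ(k+1-r)); consequently, N*_n/n^{1-r} = (n - N_n)/n^{1-r} converges almost surely and in L^1 to Y/Γ(2-r) as n → ∞. -/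
/-!
Put `α*_n = Γ(n) Γ(2-r) / Γ(n+1-r)`. The functional equation of `Γ` gives
`α*_{n+1} (1 + (1-r)/n) = α*_n`, which is exactly what makes `M*_n = α*_n N*_n` a martingale.
Because `I*_{n+1}² = I*_{n+1}`, the second moment of `M*` grows in one step by at most a
constant times `α*_n / n`, and Wendel's inequalities (log-convexity of `Γ`) give
`α*_n n^{1-r} → Γ(2-r)`, so these increments are summable. Hence `M*` is bounded in `L²`, so it
is uniformly integrable and converges almost surely and in `L¹`; dividing by
`α*_n n^{1-r} → Γ(2-r)` transfers the convergence to `N*_n / n^{1-r}`.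
-/

open MeasureTheory Filter Topology Finset
open scoped NNReal ENNReal

namespace Real

theorem Gamma_add_le_Gamma_mul_rpow {x s : ℝ} (hx : 0 < x) (hs0 : 0 < s) (hs1 : s < 1) :
    Gamma (x + s) ≤ Gamma x * x ^ s := by
  have h := Gamma_mul_add_mul_le_rpow_Gamma_mul_rpow_Gamma hx (by linarith : 0 < x + 1)
    (sub_pos.2 hs1) hs0 (sub_add_cancel 1 s)
  have hG := Gamma_pos_of_pos hx
  rwa [show (1 - s) * x + s * (x + 1) = x + s by ring, Gamma_add_one hx.ne',
    mul_rpow hx.le hG.le, ← mul_assoc, mul_comm _ (x ^ s), mul_assoc, ← rpow_add hG,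
    sub_add_cancel, rpow_one, mul_comm] at h

theorem Gamma_mul_le_Gamma_add_mul_rpow {x s : ℝ} (hx : 0 < x) (hs0 : 0 < s) (hs1 : s < 1) :
    Gamma x * x ≤ Gamma (x + s) * (x + s) ^ (1 - s) := by
  have hxs : 0 < x + s := by linarith
  have h := Gamma_mul_add_mul_le_rpow_Gamma_mul_rpow_Gamma hxs (by linarith : 0 < x + s + 1)
    hs0 (sub_pos.2 hs1) (add_sub_cancel s 1)
  have hG := Gamma_pos_of_pos hxs
  rwa [show s * (x + s) + (1 - s) * (x + s + 1) = x + 1 by ring, Gamma_add_one hx.ne',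
    Gamma_add_one hxs.ne', mul_rpow hxs.le hG.le, ← mul_assoc, mul_comm _ ((x + s) ^ (1 - s)),
    mul_assoc, ← rpow_add hG, add_sub_cancel, rpow_one, mul_comm x, mul_comm (_ ^ _)] at h

theorem tendsto_Gamma_mul_rpow_div_Gamma_add {s : ℝ} (hs0 : 0 < s) (hs1 : s < 1) :
    Tendsto (fun x => Gamma x * x ^ s / Gamma (x + s)) atTop (𝓝 1) := by
  have hupper : Tendsto (fun x : ℝ => (1 + s / x) ^ (1 - s)) atTop (𝓝 1) := by
    have h := ((tendsto_const_nhds (x := s)).div_atTop tendsto_id).const_add 1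
    rw [add_zero] at h
    simpa using h.rpow_const (Or.inl one_ne_zero) (p := 1 - s)
  refine tendsto_of_tendsto_of_tendsto_of_le_of_le' tendsto_const_nhds hupper ?_ ?_
  · filter_upwards [eventually_gt_atTop 0] with x hx
    rw [le_div_iff₀ (Gamma_pos_of_pos (by linarith)), one_mul]
    exact Gamma_add_le_Gamma_mul_rpow hx hs0 hs1
  · filter_upwards [eventually_gt_atTop 0] with x hx
    have hxs : 0 < x + s := by linarith
    have hGs := Gamma_pos_of_pos hxs
    have hw := Gamma_mul_le_Gamma_add_mul_rpow hx hs0 hs1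
    rw [show 1 + s / x = (x + s) / x by field_simp, div_rpow hxs.le hx.le, div_le_div_iff₀ hGs
      (rpow_pos_of_pos hx _), mul_assoc, ← rpow_add hx, add_sub_cancel, rpow_one, mul_comm (_ ^ _)]
    exact hw

end Real

section

variable {Ω : Type*} {m0 : MeasurableSpace Ω}

theorem uniformIntegrable_one_of_integral_sq_le {μ : Measure[m0] Ω} [IsFiniteMeasure μ]
    {ι : Type*} {f : ι → Ω → ℝ} (hf : ∀ i, AEStronglyMeasurable (f i) μ)
    (hsq : ∀ i, Integrable (fun ω => f i ω ^ 2) μ) {C : ℝ} (hC : ∀ i, ∫ ω, f i ω ^ 2 ∂μ ≤ C) :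
    UniformIntegrable f 1 μ := by
  refine uniformIntegrable_of le_rfl ENNReal.one_ne_top hf fun ε hε => ?_
  set K : ℝ≥0 := (C / ε).toNNReal + 1
  have hK : 0 < (K : ℝ) := by positivity
  have hCK : C / K ≤ ε := by
    rw [div_le_iff₀ hK, mul_comm, ← div_le_iff₀ hε]
    simpa [K] using (Real.le_coe_toNNReal (C / ε)).trans (le_add_of_nonneg_right zero_le_one)
  refine ⟨K, fun i => ?_⟩
  have hpt ω :
      ‖{ω | K ≤ ‖f i ω‖₊}.indicator (f i) ω‖ₑ ≤ ENNReal.ofReal (f i ω ^ 2 / (K : ℝ)) := by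
    by_cases hω : K ≤ ‖f i ω‖₊
    · rw [Set.indicator_of_mem (show ω ∈ {ω | K ≤ ‖f i ω‖₊} from hω), Real.enorm_eq_ofReal_abs]
      refine ENNReal.ofReal_le_ofReal ?_
      rw [le_div_iff₀ hK, ← sq_abs]
      have : (K : ℝ) ≤ |f i ω| := by exact_mod_cast hω
      nlinarith [abs_nonneg (f i ω)]
    · simp [Set.indicator_of_notMem (show ω ∉ {ω | K ≤ ‖f i ω‖₊} from hω)]
  rw [eLpNorm_one_eq_lintegral_enorm]
  calc ∫⁻ ω, ‖{ω | K ≤ ‖f i ω‖₊}.indicator (f i) ω‖ₑ ∂μ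
      ≤ ∫⁻ ω, ENNReal.ofReal (f i ω ^ 2 / (K : ℝ)) ∂μ := lintegral_mono hpt
    _ = ENNReal.ofReal ((∫ ω, f i ω ^ 2 ∂μ) / K) := by
        rw [← integral_div, ofReal_integral_eq_lintegral_ofReal ((hsq i).div_const _)
          (ae_of_all _ fun ω => by positivity)]
    _ ≤ ENNReal.ofReal ε :=
        ENNReal.ofReal_le_ofReal ((div_le_div_of_nonneg_right (hC i) hK.le).trans hCK)

theorem MeasureTheory.Martingale.exists_tendsto_of_integral_sq_le {μ : Measure[m0] Ω}
    [IsFiniteMeasure μ] {𝓕 : Filtration ℕ m0} {f : ℕ → Ω → ℝ} (hf : Martingale f 𝓕 μ)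
    (hsq : ∀ n, Integrable (fun ω => f n ω ^ 2) μ) {C : ℝ} (hC : ∀ n, ∫ ω, f n ω ^ 2 ∂μ ≤ C) :
    ∃ Y : Ω → ℝ, Integrable Y μ ∧ (∀ᵐ ω ∂μ, Tendsto (fun n => f n ω) atTop (𝓝 (Y ω))) ∧
      Tendsto (fun n => ∫ ω, |f n ω - Y ω| ∂μ) atTop (𝓝 0) := by
  have hmeas n : AEStronglyMeasurable (f n) μ :=
    ((hf.stronglyAdapted n).mono (𝓕.le n)).aestronglyMeasurable
  have hui := uniformIntegrable_one_of_integral_sq_le hmeas hsq hC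
  obtain ⟨R, hR⟩ := hui.2.2
  have hY := memLp_one_iff_integrable.1 (hf.submartingale.memLp_limitProcess hR)
  refine ⟨𝓕.limitProcess f μ, hY, hf.submartingale.ae_tendsto_limitProcess hR, ?_⟩
  have hL1 := (ENNReal.tendsto_toReal ENNReal.zero_ne_top).comp
    (hf.submartingale.tendsto_eLpNorm_one_limitProcess hui)
  refine hL1.congr fun n => ?_
  rw [Function.comp_apply, toReal_eLpNorm ((hmeas n).sub hY.aestronglyMeasurable),
    lpNorm_one_eq_integral_norm ((hmeas n).sub hY.aestronglyMeasurable)]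
  rfl

theorem tendsto_integral_abs_mul_sub {μ : Measure[m0] Ω} {ι : Type*} {l : Filter ι}
    {X : ι → Ω → ℝ} {Y : Ω → ℝ} {c : ι → ℝ} {c₀ : ℝ} (hX : ∀ i, Integrable (X i) μ)
    (hY : Integrable Y μ) (hXY : Tendsto (fun i => ∫ ω, |X i ω - Y ω| ∂μ) l (𝓝 0))
    (hc : Tendsto c l (𝓝 c₀)) :
    Tendsto (fun i => ∫ ω, |c i * X i ω - c₀ * Y ω| ∂μ) l (𝓝 0) := by
  have hbound i : ∫ ω, |c i * X i ω - c₀ * Y ω| ∂μ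
      ≤ |c i| * ∫ ω, |X i ω - Y ω| ∂μ + |c i - c₀| * ∫ ω, |Y ω| ∂μ := by
    have hdiff : Integrable (fun ω => |X i ω - Y ω|) μ := ((hX i).sub hY).abs
    rw [← integral_const_mul, ← integral_const_mul, ← integral_add (hdiff.const_mul _)
      (hY.abs.const_mul _)]
    refine integral_mono (((hX i).const_mul _).sub (hY.const_mul _)).abs
      ((hdiff.const_mul _).add (hY.abs.const_mul _)) fun ω => ?_
    calc |c i * X i ω - c₀ * Y ω| = |c i * (X i ω - Y ω) + (c i - c₀) * Y ω| := by ring_nf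
      _ ≤ |c i| * |X i ω - Y ω| + |c i - c₀| * |Y ω| := by
        simpa only [abs_mul] using abs_add_le (c i * (X i ω - Y ω)) ((c i - c₀) * Y ω)
  have hupper : Tendsto (fun i => |c i| * ∫ ω, |X i ω - Y ω| ∂μ
      + |c i - c₀| * ∫ ω, |Y ω| ∂μ) l (𝓝 (|c₀| * 0 + |c₀ - c₀| * ∫ ω, |Y ω| ∂μ)) :=
    (hc.abs.mul hXY).add ((hc.sub_const c₀).abs.mul_const _)
  rw [sub_self, abs_zero, zero_mul, mul_zero, add_zero] at hupper
  exact tendsto_of_tendsto_of_tendsto_of_le_of_le tendsto_const_nhds hupper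
    (fun i => integral_nonneg fun ω => abs_nonneg _) hbound

theorem integral_mul_condExp_of_stronglyMeasurable {m : MeasurableSpace Ω} {μ : Measure[m0] Ω}
    (hm : m ≤ m0) [SigmaFinite (μ.trim hm)] {X Z : Ω → ℝ} (hX : StronglyMeasurable[m] X)
    (hXZ : Integrable (X * Z) μ) (hZ : Integrable Z μ) :
    ∫ ω, X ω * (μ[Z|m]) ω ∂μ = ∫ ω, X ω * Z ω ∂μ := by
  calc ∫ ω, X ω * (μ[Z|m]) ω ∂μ = ∫ ω, (μ[X * Z|m]) ω ∂μ :=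
        integral_congr_ae (condExp_mul_of_stronglyMeasurable_left hX hXZ hZ).symm
    _ = ∫ ω, X ω * Z ω ∂μ := integral_condExp hm

theorem le_add_tsum_of_succ_le_add {u c : ℕ → ℝ} (hu : ∀ n, u (n + 1) ≤ u n + c n)
    (hc0 : ∀ n, 0 ≤ c n) (hc : Summable c) (n : ℕ) : u n ≤ u 0 + ∑' k, c k := by
  have hpartial : u n ≤ u 0 + ∑ k ∈ range n, c k := by
    induction n with
    | zero => simp
    | succ n ih => rw [sum_range_succ]; linarith [hu n]
  linarith [hc.sum_le_tsum (range n) fun k _ => hc0 k]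

noncomputable def alphaStar (r : ℝ) (k : ℕ) : ℝ :=
  Real.Gamma k * Real.Gamma (2 - r) / Real.Gamma (k + 1 - r)

section alphaStar

variable {r : ℝ}

theorem alphaStar_nonneg (hr : r < 1) (k : ℕ) : 0 ≤ alphaStar r k := by
  have := Real.Gamma_pos_of_pos (by linarith : (0 : ℝ) < 2 - r)
  have := Real.Gamma_pos_of_pos (by linarith [k.cast_nonneg (α := ℝ)] : (0 : ℝ) < k + 1 - r)
  have := Real.Gamma_nonneg_of_nonneg (Nat.cast_nonneg (α := ℝ) k)
  unfold alphaStar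
  positivity

theorem alphaStar_pos (hr : r < 1) {k : ℕ} (hk : 1 ≤ k) : 0 < alphaStar r k := by
  have := Real.Gamma_pos_of_pos (by linarith : (0 : ℝ) < 2 - r)
  have := Real.Gamma_pos_of_pos (by linarith [k.cast_nonneg (α := ℝ)] : (0 : ℝ) < k + 1 - r)
  have := Real.Gamma_pos_of_pos (by exact_mod_cast hk : (0 : ℝ) < k)
  unfold alphaStar
  positivity

theorem alphaStar_one (hr : r < 2) : alphaStar r 1 = 1 := by
  have := (Real.Gamma_pos_of_pos (by linarith : (0 : ℝ) < 2 - r)).ne'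
  simp [alphaStar, show (1 : ℝ) + 1 - r = 2 - r by ring, this]

theorem alphaStar_succ_mul (hr : r < 1) {k : ℕ} (hk : 1 ≤ k) :
    alphaStar r (k + 1) * (1 + (1 - r) / k) = alphaStar r k := by
  have hk' : (0 : ℝ) < k := by exact_mod_cast hk
  have hkr : (0 : ℝ) < k + 1 - r := by linarith
  have hG := (Real.Gamma_pos_of_pos hkr).ne'
  simp only [alphaStar]
  push_cast
  rw [Real.Gamma_add_one hk'.ne', show (k : ℝ) + 1 + 1 - r = k + 1 - r + 1 by ring,
    Real.Gamma_add_one hkr.ne']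
  field_simp
  ring

theorem alphaStar_succ_le (hr : r < 1) {k : ℕ} (hk : 1 ≤ k) :
    alphaStar r (k + 1) ≤ alphaStar r k := by
  have : 0 ≤ (1 - r) / k := div_nonneg (by linarith) k.cast_nonneg
  rw [← alphaStar_succ_mul hr hk]
  nlinarith [alphaStar_nonneg hr (k + 1)]

theorem alphaStar_succ_sq_mul_le (hr : r < 1) {k : ℕ} (hk : 1 ≤ k) :
    alphaStar r (k + 1) ^ 2 * (1 + 2 * ((1 - r) / k)) ≤ alphaStar r k ^ 2 := by
  rw [← alphaStar_succ_mul hr hk]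
  nlinarith [sq_nonneg (alphaStar r (k + 1) * ((1 - r) / k))]

theorem tendsto_alphaStar_mul_rpow (hr0 : 0 < r) (hr1 : r < 1) :
    Tendsto (fun n : ℕ => alphaStar r n * (n : ℝ) ^ (1 - r)) atTop
      (𝓝 (Real.Gamma (2 - r))) := by
  have h := (Real.tendsto_Gamma_mul_rpow_div_Gamma_add (s := 1 - r) (by linarith)
    (by linarith)).comp tendsto_natCast_atTop_atTop
  rw [← mul_one (Real.Gamma (2 - r))]
  refine (h.const_mul (Real.Gamma (2 - r))).congr fun n => ?_
  simp only [Function.comp_apply, alphaStar, show (n : ℝ) + (1 - r) = n + 1 - r by ring]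
  ring

theorem summable_alphaStar_div (hr0 : 0 < r) (hr1 : r < 1) :
    Summable fun n : ℕ => alphaStar r n / n := by
  obtain ⟨B, hB⟩ := (tendsto_alphaStar_mul_rpow hr0 hr1).bddAbove_range
  refine Summable.of_nonneg_of_le (fun n => div_nonneg (alphaStar_nonneg hr1 n) n.cast_nonneg)
    (fun n => ?_) ((Real.summable_nat_rpow.2 (by linarith : r - 2 < -1)).mul_left B)
  rcases Nat.eq_zero_or_pos n with rfl | hn
  · simp [Real.zero_rpow (by linarith : r - 2 ≠ 0)]
  have hn' : (0 : ℝ) < n := by exact_mod_cast hn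
  calc alphaStar r n / n = alphaStar r n * (n : ℝ) ^ (1 - r) * (n : ℝ) ^ (r - 2) := by
        rw [mul_assoc, ← Real.rpow_add hn', show 1 - r + (r - 2) = -1 by ring, Real.rpow_neg_one,
          div_eq_mul_inv]
    _ ≤ B * (n : ℝ) ^ (r - 2) :=
        mul_le_mul_of_nonneg_right (hB ⟨n, rfl⟩) (Real.rpow_nonneg hn'.le _)

end alphaStar

def MeasureTheory.Filtration.succ (𝓕 : Filtration ℕ m0) : Filtration ℕ m0 :=
  ⟨fun n => 𝓕 (n + 1), fun _ _ hij => 𝓕.mono (Nat.succ_le_succ hij), fun n => 𝓕.le (n + 1)⟩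

def nonzeroCount (I : ℕ → Ω → ℝ) (n : ℕ) (ω : Ω) : ℝ := ∑ k ∈ Icc 1 n, I k ω

theorem nonzeroCount_succ (I : ℕ → Ω → ℝ) (n : ℕ) (ω : Ω) :
    nonzeroCount I (n + 1) ω = nonzeroCount I n ω + I (n + 1) ω :=
  sum_Icc_succ_top (Nat.le_add_left 1 n) _

structure IsDelayedElephantIndicator (μ : Measure[m0] Ω) (𝓕 : Filtration ℕ m0) (r : ℝ)
    (I : ℕ → Ω → ℝ) : Prop where
  eq_zero_or_eq_one : ∀ n, 1 ≤ n → ∀ ω, I n ω = 0 ∨ I n ω = 1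
  stronglyMeasurable : ∀ n, 1 ≤ n → StronglyMeasurable[𝓕 n] (I n)
  condExp_succ : ∀ n, 1 ≤ n →
    μ[I (n + 1)|𝓕 n] =ᵐ[μ] fun ω => (1 - r) / n * nonzeroCount I n ω

namespace IsDelayedElephantIndicator

variable {μ : Measure[m0] Ω} {𝓕 : Filtration ℕ m0} {r : ℝ} {I : ℕ → Ω → ℝ} {n : ℕ}
  (h : IsDelayedElephantIndicator μ 𝓕 r I)
include h

theorem apply_mem_Icc (hn : 1 ≤ n) (ω : Ω) : I n ω ∈ Set.Icc 0 1 := by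
  rcases h.eq_zero_or_eq_one n hn ω with h0 | h1 <;> simp [*]

theorem sq_eq (hn : 1 ≤ n) (ω : Ω) : I n ω ^ 2 = I n ω := by
  rcases h.eq_zero_or_eq_one n hn ω with h0 | h1 <;> simp [*]

theorem nonzeroCount_mem_Icc (n : ℕ) (ω : Ω) : nonzeroCount I n ω ∈ Set.Icc 0 (n : ℝ) := by
  have hmem k (hk : k ∈ Icc 1 n) := h.apply_mem_Icc (Finset.mem_Icc.1 hk).1 ω
  refine ⟨sum_nonneg fun k hk => (hmem k hk).1, ?_⟩
  calc nonzeroCount I n ω ≤ ∑ _k ∈ Icc 1 n, (1 : ℝ) := sum_le_sum fun k hk => (hmem k hk).2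
    _ = n := by simp

theorem stronglyMeasurable_nonzeroCount (n : ℕ) :
    StronglyMeasurable[𝓕 n] (nonzeroCount I n) := by
  have : nonzeroCount I n = ∑ k ∈ Icc 1 n, I k := by ext ω; simp [nonzeroCount]
  rw [this]
  exact Finset.stronglyMeasurable_sum _ fun k hk =>
    (h.stronglyMeasurable k (Finset.mem_Icc.1 hk).1).mono (𝓕.mono (Finset.mem_Icc.1 hk).2)

variable [IsFiniteMeasure μ]

theorem memLp (hn : 1 ≤ n) (p : ℝ≥0∞) : MemLp (I n) p μ :=
  .of_bound ((h.stronglyMeasurable n hn).mono (𝓕.le n)).aestronglyMeasurable 1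
    (ae_of_all _ fun ω => by
      rw [Real.norm_eq_abs, abs_of_nonneg (h.apply_mem_Icc hn ω).1]
      exact (h.apply_mem_Icc hn ω).2)

theorem memLp_nonzeroCount (n : ℕ) (p : ℝ≥0∞) : MemLp (nonzeroCount I n) p μ :=
  .of_bound ((h.stronglyMeasurable_nonzeroCount n).mono (𝓕.le n)).aestronglyMeasurable n
    (ae_of_all _ fun ω => by
      rw [Real.norm_eq_abs, abs_of_nonneg (h.nonzeroCount_mem_Icc n ω).1]
      exact (h.nonzeroCount_mem_Icc n ω).2)

theorem condExp_nonzeroCount_succ (hn : 1 ≤ n) :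
    μ[nonzeroCount I (n + 1)|𝓕 n] =ᵐ[μ] fun ω => (1 + (1 - r) / n) * nonzeroCount I n ω := by
  have hsplit : nonzeroCount I (n + 1) = nonzeroCount I n + I (n + 1) :=
    funext (nonzeroCount_succ I n)
  have hN := (h.memLp_nonzeroCount n 1).integrable le_rfl
  have hI := (h.memLp (n := n + 1) (by omega) 1).integrable le_rfl
  rw [hsplit]
  filter_upwards [condExp_add hN hI (𝓕 n), h.condExp_succ n hn] with ω hadd hnext
  rw [hadd, Pi.add_apply, hnext,
    condExp_of_stronglyMeasurable (𝓕.le n) (h.stronglyMeasurable_nonzeroCount n) hN]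
  ring

theorem martingale (hr : r < 1) :
    Martingale (fun n ω => alphaStar r (n + 1) * nonzeroCount I (n + 1) ω) 𝓕.succ μ := by
  refine martingale_nat (fun n => (h.stronglyMeasurable_nonzeroCount (n + 1)).const_mul _)
    (fun n => ((h.memLp_nonzeroCount (n + 1) 1).integrable le_rfl).const_mul _) fun n => ?_
  have hcond := h.condExp_nonzeroCount_succ (n := n + 1) (by omega)
  filter_upwards [condExp_smul (μ := μ) (alphaStar r (n + 2)) (nonzeroCount I (n + 2))
    (𝓕 (n + 1)), hcond] with ω hsmul hω
  change alphaStar r (n + 1) * nonzeroCount I (n + 1) ω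
    = (μ[alphaStar r (n + 2) • nonzeroCount I (n + 2)|𝓕 (n + 1)]) ω
  rw [hsmul, Pi.smul_apply, hω, smul_eq_mul, ← mul_assoc, alphaStar_succ_mul hr (by omega)]

theorem integral_nonzeroCount (hr : r < 1) (n : ℕ) :
    ∫ ω, nonzeroCount I (n + 1) ω ∂μ = (∫ ω, I 1 ω ∂μ) / alphaStar r (n + 1) := by
  have hmean := (h.martingale hr).setIntegral_eq (Nat.zero_le n) MeasurableSet.univ
  simp only [setIntegral_univ, integral_const_mul, alphaStar_one (by linarith : r < 2),
    one_mul] at hmean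
  rw [eq_div_iff (alphaStar_pos hr (by omega)).ne', mul_comm, ← hmean]
  simp [nonzeroCount]

theorem integral_nonzeroCount_succ_sq (hn : 1 ≤ n) :
    ∫ ω, nonzeroCount I (n + 1) ω ^ 2 ∂μ
      = (1 + 2 * ((1 - r) / n)) * ∫ ω, nonzeroCount I n ω ^ 2 ∂μ
        + (1 - r) / n * ∫ ω, nonzeroCount I n ω ∂μ := by
  have hN := h.memLp_nonzeroCount n 2
  have hI := h.memLp (n := n + 1) (by omega) 2
  have hNI : Integrable (nonzeroCount I n * I (n + 1)) μ := hN.integrable_mul hI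
  have hcond := h.condExp_succ n hn
  have hexpand ω : nonzeroCount I (n + 1) ω ^ 2
      = nonzeroCount I n ω ^ 2 + 2 * (nonzeroCount I n ω * I (n + 1) ω) + I (n + 1) ω := by
    rw [nonzeroCount_succ, add_sq, h.sq_eq (by omega)]
    ring
  have hcross : ∫ ω, nonzeroCount I n ω * I (n + 1) ω ∂μ
      = (1 - r) / n * ∫ ω, nonzeroCount I n ω ^ 2 ∂μ := by
    rw [← integral_mul_condExp_of_stronglyMeasurable (𝓕.le n)
      (h.stronglyMeasurable_nonzeroCount n) hNI (hI.integrable one_le_two),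
      ← integral_const_mul]
    refine integral_congr_ae ?_
    filter_upwards [hcond] with ω hω
    rw [hω]
    ring
  have hmean_next : ∫ ω, I (n + 1) ω ∂μ = (1 - r) / n * ∫ ω, nonzeroCount I n ω ∂μ := by
    rw [← integral_condExp (𝓕.le n), ← integral_const_mul]
    exact integral_congr_ae hcond
  have hcross_int : Integrable (fun ω => 2 * (nonzeroCount I n ω * I (n + 1) ω)) μ :=
    hNI.const_mul 2
  have hsum_int : Integrable
      (fun ω => nonzeroCount I n ω ^ 2 + 2 * (nonzeroCount I n ω * I (n + 1) ω)) μ :=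
    hN.integrable_sq.add hcross_int
  simp_rw [hexpand]
  rw [integral_add hsum_int (hI.integrable one_le_two),
    integral_add hN.integrable_sq hcross_int, integral_const_mul, hcross, hmean_next]
  ring

theorem integral_sq_succ_le (hr : r < 1) (hn : 1 ≤ n) :
    ∫ ω, (alphaStar r (n + 1) * nonzeroCount I (n + 1) ω) ^ 2 ∂μ
      ≤ ∫ ω, (alphaStar r n * nonzeroCount I n ω) ^ 2 ∂μ
        + (1 - r) * (∫ ω, I 1 ω ∂μ) * (alphaStar r n / n) := by
  obtain ⟨m, rfl⟩ : ∃ m, n = m + 1 := ⟨n - 1, by omega⟩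
  set a := alphaStar r (m + 1)
  set a' := alphaStar r (m + 1 + 1)
  set p := (1 - r) / ((m + 1 : ℕ) : ℝ)
  set A := ∫ ω, nonzeroCount I (m + 1) ω ^ 2 ∂μ
  set E := ∫ ω, I 1 ω ∂μ
  have ha : 0 < a := alphaStar_pos hr (by omega)
  have hE : 0 ≤ E := integral_nonneg fun ω => (h.apply_mem_Icc le_rfl ω).1
  have ha'a : a' ^ 2 ≤ a ^ 2 :=
    pow_le_pow_left₀ (alphaStar_nonneg hr _) (alphaStar_succ_le hr (by omega)) 2
  simp_rw [mul_pow]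
  rw [integral_const_mul, integral_const_mul, h.integral_nonzeroCount_succ_sq (by omega),
    h.integral_nonzeroCount hr]
  calc a' ^ 2 * ((1 + 2 * p) * A + p * (E / a))
      = a' ^ 2 * (1 + 2 * p) * A + a' ^ 2 * (p * E / a) := by ring
    _ ≤ a ^ 2 * A + a ^ 2 * (p * E / a) := by
        gcongr
        exact alphaStar_succ_sq_mul_le hr (by omega)
    _ = a ^ 2 * A + (1 - r) * E * (a / ((m + 1 : ℕ) : ℝ)) := by
        simp only [p]
        field_simp

theorem exists_integral_sq_le (hr0 : 0 < r) (hr1 : r < 1) :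
    ∃ C, ∀ n, ∫ ω, (alphaStar r (n + 1) * nonzeroCount I (n + 1) ω) ^ 2 ∂μ ≤ C := by
  set c : ℕ → ℝ := fun k => (1 - r) * (∫ ω, I 1 ω ∂μ) * (alphaStar r (k + 1) / (k + 1 : ℕ))
  have hE : 0 ≤ ∫ ω, I 1 ω ∂μ := integral_nonneg fun ω => (h.apply_mem_Icc le_rfl ω).1
  have hc0 k : 0 ≤ c k :=
    mul_nonneg (mul_nonneg (by linarith) hE)
      (div_nonneg (alphaStar_nonneg hr1 _) (Nat.cast_nonneg _))
  have hc : Summable c :=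
    ((summable_nat_add_iff 1).2 (summable_alphaStar_div hr0 hr1)).mul_left _
  exact ⟨_, le_add_tsum_of_succ_le_add (fun k => h.integral_sq_succ_le hr1 (n := k + 1)
    (by omega)) hc0 hc⟩

end IsDelayedElephantIndicator

end

theorem martingale_limit_nonzero_steps_general
    {Ω : Type*} [m0 : MeasurableSpace Ω] (μ : Measure Ω) [IsProbabilityMeasure μ]
    (𝓕 : Filtration ℕ m0) (r : ℝ) (hr0 : 0 < r) (hr1 : r < 1)
    (Istar : ℕ → Ω → ℝ)
    (h01 : ∀ n : ℕ, 1 ≤ n → ∀ ω, Istar n ω = 0 ∨ Istar n ω = 1)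
    (hadapt : ∀ n : ℕ, 1 ≤ n → StronglyMeasurable[𝓕 n] (Istar n))
    (Nstar : ℕ → Ω → ℝ)
    (hN : ∀ n ω, Nstar n ω = ∑ k ∈ Finset.Icc 1 n, Istar k ω)
    (hcond : ∀ n : ℕ, 1 ≤ n →
      (μ[Istar (n + 1)|𝓕 n]) =ᵐ[μ] fun ω => ((1 - r) / (n : ℝ)) * Nstar n ω)
    (astar : ℕ → ℝ)
    (hastar : ∀ k : ℕ, astar k
      = Real.Gamma (k : ℝ) * Real.Gamma (2 - r) / Real.Gamma ((k : ℝ) + 1 - r)) :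
    ∃ Y : Ω → ℝ, Integrable Y μ ∧
      (∀ᵐ ω ∂μ, Tendsto (fun n : ℕ => astar n * Nstar n ω) atTop (nhds (Y ω))) ∧
      Tendsto (fun n : ℕ => ∫ ω, |astar n * Nstar n ω - Y ω| ∂μ) atTop (nhds 0) ∧
      (∀ᵐ ω ∂μ, Tendsto (fun n : ℕ => Nstar n ω / (n : ℝ) ^ (1 - r)) atTop
        (nhds (Y ω / Real.Gamma (2 - r)))) ∧
      Tendsto (fun n : ℕ =>
          ∫ ω, |Nstar n ω / (n : ℝ) ^ (1 - r) - Y ω / Real.Gamma (2 - r)| ∂μ)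
        atTop (nhds 0) := by
  obtain rfl : Nstar = nonzeroCount Istar := funext fun n => funext (hN n)
  obtain rfl : astar = alphaStar r := funext hastar
  have h : IsDelayedElephantIndicator μ 𝓕 r Istar := ⟨h01, hadapt, hcond⟩
  obtain ⟨C, hC⟩ := h.exists_integral_sq_le hr0 hr1
  obtain ⟨Y, hY, hae, hL1⟩ := (h.martingale hr1).exists_tendsto_of_integral_sq_le
    (fun n => ((h.memLp_nonzeroCount (n + 1) 2).const_mul _).integrable_sq) hC
  replace hae : ∀ᵐ ω ∂μ, Tendsto (fun n => alphaStar r n * nonzeroCount Istar n ω) atTop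
      (𝓝 (Y ω)) := by
    filter_upwards [hae] with ω hω using (tendsto_add_atTop_iff_nat 1).1 hω
  replace hL1 := (tendsto_add_atTop_iff_nat
    (f := fun n => ∫ ω, |alphaStar r n * nonzeroCount Istar n ω - Y ω| ∂μ) 1).1 hL1
  have hscale := (tendsto_alphaStar_mul_rpow hr0 hr1).inv₀
    (Real.Gamma_pos_of_pos (by linarith : 0 < 2 - r)).ne'
  have hnormalize : ∀ᶠ n : ℕ in atTop, ∀ ω, nonzeroCount Istar n ω / (n : ℝ) ^ (1 - r)
      = (alphaStar r n * (n : ℝ) ^ (1 - r))⁻¹ * (alphaStar r n * nonzeroCount Istar n ω) := by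
    filter_upwards [eventually_ge_atTop 1] with n hn ω
    have := (alphaStar_pos hr1 hn).ne'
    field_simp
  refine ⟨Y, hY, hae, hL1, ?_, ?_⟩
  · filter_upwards [hae] with ω hω
    rw [div_eq_inv_mul]
    exact (hscale.mul hω).congr' (hnormalize.mono fun n hn => (hn ω).symm)
  · simp_rw [div_eq_inv_mul (Y _)]
    refine (tendsto_integral_abs_mul_sub
      (fun n => ((h.memLp_nonzeroCount n 1).integrable le_rfl).const_mul _) hY hL1 hscale).congr'
      (hnormalize.mono fun n hn => ?_)
    simp_rw [hn]

/-- Theorem 3.1: there is a random variable `Y` such that `M*_n = α*_n N*_n → Y`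
almost surely and in `L¹`, and consequently
`N*_n/n^{1-r} = (n - N_n)/n^{1-r} → Y/Γ(2-r)` almost surely and in `L¹`. -/
theorem martingale_limit_nonzero_steps
    {Ω : Type*} [m0 : MeasurableSpace Ω] (μ : Measure Ω) [IsProbabilityMeasure μ]
    (𝓕 : Filtration ℕ m0) (r : ℝ) (hr0 : 0 < r) (hr1 : r < 1)
    (Istar : ℕ → Ω → ℝ)
    (h01 : ∀ n : ℕ, 1 ≤ n → ∀ ω, Istar n ω = 0 ∨ Istar n ω = 1)
    (hadapt : ∀ n : ℕ, 1 ≤ n → StronglyMeasurable[𝓕 n] (Istar n))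
    (hint : ∀ n : ℕ, 1 ≤ n → Integrable (Istar n) μ)
    (Nstar : ℕ → Ω → ℝ)
    (hN : ∀ n ω, Nstar n ω = ∑ k ∈ Finset.Icc 1 n, Istar k ω)
    (hI1 : ∫ ω, Istar 1 ω ∂μ = 1 - r)
    (hcond : ∀ n : ℕ, 1 ≤ n →
      (μ[Istar (n + 1)|𝓕 n]) =ᵐ[μ] fun ω => ((1 - r) / (n : ℝ)) * Nstar n ω)
    (astar : ℕ → ℝ)
    (hastar : ∀ k : ℕ, astar k
      = Real.Gamma (k : ℝ) * Real.Gamma (2 - r) / Real.Gamma ((k : ℝ) + 1 - r)) :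
    ∃ Y : Ω → ℝ, Integrable Y μ ∧
      (∀ᵐ ω ∂μ, Tendsto (fun n : ℕ => astar n * Nstar n ω) atTop (nhds (Y ω))) ∧
      Tendsto (fun n : ℕ => ∫ ω, |astar n * Nstar n ω - Y ω| ∂μ) atTop (nhds 0) ∧
      (∀ᵐ ω ∂μ, Tendsto (fun n : ℕ => Nstar n ω / (n : ℝ) ^ (1 - r)) atTop
        (nhds (Y ω / Real.Gamma (2 - r)))) ∧
      Tendsto (fun n : ℕ =>
          ∫ ω, |Nstar n ω / (n : ℝ) ^ (1 - r) - Y ω / Real.Gamma (2 - r)| ∂μ)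
        atTop (nhds 0) :=
  martingale_limit_nonzero_steps_general (m0 := m0) μ 𝓕 r hr0 hr1 Istar h01 hadapt Nstar hN hcond
    astar hastar
end
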